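/- For any pair of invertible elements U₁, U₂ of a (possibly noncommutative) monoid of matrices satisfying U₁U₂ = q U₂U₁ with q a central invertible scalar, the transformations S(U₁,U₂) = (U₂, U₁⁻¹) and T(U₁,U₂) = (q^{-1/2} U₁U₂, U₂) satisfy (ST)³(U₁,U₂) = (U₁,U₂) and S⁴(U₁,U₂) = (U₁,U₂), where q^{1/2} is a fixed square root of q. -/
import Mathlib


/-- The modular transformation `S : (U₁, U₂) ↦ (U₂, U₁⁻¹)`, using `Ring.inverse`. -/
noncomputable def modS {R : Type*} [MonoidWithZero R] (p : R × R) : R × R :=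
  (p.2, Ring.inverse p.1)

/-- The modular transformation `T : (U₁, U₂) ↦ (q^{-1/2} U₁U₂, U₂)`, where `c`
stands for the scalar `q^{-1/2}`. -/
def modT {k R : Type*} [Mul R] [SMul k R] (c : k) (p : R × R) : R × R :=
  (c • (p.1 * p.2), p.2)

private theorem ring_inverse_eq {R : Type*} [MonoidWithZero R] {x y : R}
    (h1 : x * y = 1) (h2 : y * x = 1) : Ring.inverse x = y := by
  have hx : IsUnit x := ⟨⟨x, y, h1, h2⟩, rfl⟩
  calc Ring.inverse x = Ring.inverse x * (x * y) := by rw [h1, mul_one]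
    _ = y := Ring.inverse_mul_cancel_left x y hx

set_option maxHeartbeats 1000000 in
/-- For invertible matrices `U₁, U₂` with `U₁U₂ = q U₂U₁` (`q` a central
invertible scalar with fixed square root `s`), the transformations
`S(U₁,U₂) = (U₂, U₁⁻¹)` and `T(U₁,U₂) = (q^{-1/2} U₁U₂, U₂)` satisfy
`S⁴(U₁,U₂) = (U₁,U₂)` and `(ST)³(U₁,U₂) = (U₁,U₂)`. -/
theorem modular_relations_qhalf {k A : Type*} [Field k] [Ring A] [Algebra k A]
    (q s : k) (hs : s ^ 2 = q) (hs0 : s ≠ 0)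
    (p : Matrix (Fin 2) (Fin 2) A × Matrix (Fin 2) (Fin 2) A)
    (h1 : IsUnit p.1) (h2 : IsUnit p.2)
    (hcomm : p.1 * p.2 = q • (p.2 * p.1)) :
    modS (modS (modS (modS p))) = p ∧
    (modS ∘ modT s⁻¹) ((modS ∘ modT s⁻¹) ((modS ∘ modT s⁻¹) p)) = p := by
  obtain ⟨u, hu⟩ := h1
  obtain ⟨v, hv⟩ := h2
  obtain ⟨U, V⟩ := p
  simp only at hu hv
  subst hu hv
  have hinv : ∀ w : (Matrix (Fin 2) (Fin 2) A)ˣ,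
      Ring.inverse w.val = (w⁻¹).val := fun w => Ring.inverse_unit w
  constructor
  · simp only [modS]
    rw [hinv u, hinv v, hinv u⁻¹, hinv v⁻¹, inv_inv, inv_inv]
  · have key : ∀ w₁ w₂ : (Matrix (Fin 2) (Fin 2) A)ˣ,
        Ring.inverse (s⁻¹ • (w₁.val * w₂.val)) = s • ((w₂⁻¹).val * (w₁⁻¹).val) := by
      intro w₁ w₂
      apply ring_inverse_eq
      · rw [smul_mul_smul_comm, inv_mul_cancel₀ hs0, one_smul, mul_assoc,
          ← mul_assoc w₂.val, Units.mul_inv, one_mul, Units.mul_inv]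
      · rw [smul_mul_smul_comm, mul_inv_cancel₀ hs0, one_smul, mul_assoc,
          ← mul_assoc (w₁⁻¹).val, Units.inv_mul, one_mul, Units.inv_mul]
    simp only [Function.comp, modS, modT]
    rw [key u v]
    have step2 : (s⁻¹ • (v.val * (s • ((v⁻¹).val * (u⁻¹).val)))) = (u⁻¹).val := by
      rw [mul_smul_comm, smul_smul, inv_mul_cancel₀ hs0, one_smul,
        ← mul_assoc, Units.mul_inv, one_mul]
    rw [step2, hinv u⁻¹]
    have step3 : (s⁻¹ • ((s • ((v⁻¹).val * (u⁻¹).val)) * (u⁻¹⁻¹).val)) = (v⁻¹).val := by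
      rw [inv_inv, smul_mul_assoc, smul_smul, inv_mul_cancel₀ hs0, one_smul,
        mul_assoc, Units.inv_mul, mul_one]
    rw [step3, hinv v⁻¹, inv_inv]
    rw [inv_inv]
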